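/- Suppose the rooted tree T has depth at most D (every root-to-vertex path has at most D edges). Then for every vertex v ∈ V, the number of ordered pairs (x,y) of vertices such that v ∈ LDS(x,y) is at most log₂(n) · (D+2). (Indeed, v ∈ LDS(x,y) forces x to be a light ancestor of v—at most log₂(n) choices—and y to be one of the at most D+2 vertices of π_x(s, C_{x,v}).) -/

import Mathlib

/-!
A light child's subtree has at most half the vertices of its parent's subtree, because the
heavy child's subtree is at least as large and disjoint from it. The light ancestors of `v`
form a chain, so going down the chain the subtree sizes at least halve each time: there are at
most `log₂ n` of them. For each such `x`, the path `π_x(s, C_{x,v})` consists of the at most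
`D + 1` ancestors of `u_C` and the vertex `v_C`.
-/


/-- A rooted spanning tree of the graph `G`, given by a root and a parent function:
the root is a fixed point of `parent`, every vertex reaches the root by iterating
`parent`, and every (parent, child) pair is an edge of `G`. -/
structure RSTree {V : Type*} (G : SimpleGraph V) where
  root : V
  parent : V → V
  parent_root : parent root = root
  reaches : ∀ v : V, ∃ n : ℕ, parent^[n] v = root
  adj : ∀ v : V, v ≠ root → G.Adj (parent v) v

namespace RSTree

variable {V : Type*} {G : SimpleGraph V}

/-- `u` is an ancestor of `v` in `T`, i.e. `u` lies on the tree path `π(root, v)`;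
includes `u = v`. -/
def Anc (T : RSTree G) (u v : V) : Prop := ∃ n : ℕ, T.parent^[n] v = u

/-- The vertex set `V(T_x)` of the subtree of `T` rooted at `x`. -/
def sub (T : RSTree G) (x : V) : Set V := {v | T.Anc x v}

/-- `c` is a child of `v` in `T`. -/
def IsChild (T : RSTree G) (c v : V) : Prop := T.parent c = v ∧ c ≠ v

/-- `V_x = V(T_x) \ {x}`. -/
def Vx (T : RSTree G) (x : V) : Set V := {v | T.Anc x v ∧ v ≠ x}

end RSTree

/-- `v` and `w` are connected by a walk of `G` all of whose vertices lie in `S`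
(i.e. they lie in the same connected component of the induced subgraph `G[S]`). -/
def ReachableWithin {V : Type*} (G : SimpleGraph V) (S : Set V) (v w : V) : Prop :=
  ∃ p : G.Walk v w, ∀ u ∈ p.support, u ∈ S

/-- `C` is (the vertex set of) a connected component of the induced subgraph `G[S]`. -/
def IsCompOf {V : Type*} (G : SimpleGraph V) (S : Set V) (C : Set V) : Prop :=
  ∃ v ∈ S, C = {w | ReachableWithin G S v w}

/-- The connected component of `v` in the induced subgraph `G[S]` (as a vertex set). -/
def CompOfVert {V : Type*} (G : SimpleGraph V) (S : Set V) (v : V) : Set V :=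
  {w | ReachableWithin G S v w}

/-- The vertex set of the path `π_x(s,C) = π(s, u_C) ∘ (u_C, v_C)` associated to a
component `C` (given the choice functions `uc, vc` of the edge `(u_C, v_C)`): it
consists of all ancestors of `u_C` together with `v_C`. -/
def CompPath {V : Type*} {G : SimpleGraph V} (T : RSTree G)
    (uc vc : Set V → V) (C : Set V) : Set V :=
  {w | T.Anc w (uc C)} ∪ {vc C}

/-- `C ∈ 𝒞_x` is pseudo-`y`-sensitive: the path `π_x(s,C)` contains a tree edge
`(y, y')` from `y` to a child `y'` of `y` such that `x` does not lie on
`π_y(s, C_{y,y'})`. Here `ucx, vcx` are the edge choices for components of `G[V_x]`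
and `ucy, vcy` those for components of `G[V_y]`. -/
def PseudoSens {V : Type*} {G : SimpleGraph V} (T : RSTree G)
    (ucx vcx ucy vcy : Set V → V) (x y : V) (C : Set V) : Prop :=
  ∃ y', T.IsChild y' y ∧ T.Anc y' (ucx C) ∧
    x ∉ CompPath T ucy vcy (CompOfVert G (T.Vx y) y')

/-- `C ∈ 𝒞_x` is fully-`y`-sensitive: `y` lies on `π_x(s,C)` (i.e. `C` is
`y`-sensitive) and `C` is not pseudo-`y`-sensitive. -/
def FullySens {V : Type*} {G : SimpleGraph V} (T : RSTree G)
    (ucx vcx ucy vcy : Set V → V) (x y : V) (C : Set V) : Prop :=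
  y ∈ CompPath T ucx vcx C ∧ ¬ PseudoSens T ucx vcx ucy vcy x y C

/-- `hch` is a valid designation of heavy children: for every non-leaf vertex `v`,
`hch v` is a child of `v` whose subtree has the maximum number of vertices among all
children of `v`. -/
def HchValid {V : Type*} {G : SimpleGraph V} (T : RSTree G) (hch : V → V) : Prop :=
  ∀ v : V, (∃ c, T.IsChild c v) →
    T.IsChild (hch v) v ∧ ∀ c, T.IsChild c v → (T.sub c).ncard ≤ (T.sub (hch v)).ncard

/-- The family `uc, vc` of edge choices is valid: for every `x ≠ s` with `G \ {x}`
connected and every connected component `C` of `G[V_x]`, `(uc x C, vc x C)` is an edge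
of `G` with `vc x C ∈ C` and `uc x C ∉ V(T_x)`. -/
def GoodChoice {V : Type*} (G : SimpleGraph V) (T : RSTree G)
    (uc vc : V → Set V → V) : Prop :=
  ∀ x : V, x ≠ T.root → (G.induce (({x} : Set V)ᶜ)).Connected →
    ∀ C, IsCompOf G (T.Vx x) C →
      G.Adj (uc x C) (vc x C) ∧ vc x C ∈ C ∧ uc x C ∉ T.sub x

/-- `x, y` is a heavy pair: an independent pair, both non-leaves of `T`, both `≠ s`,
with `G \ {x}` and `G \ {y}` connected, such that every fully-`y`-sensitive component
`C ∈ FS(x,y)` has the tree edge `(y, y_h)` on `π_x(s,C)` and every fully-`x`-sensitive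
component `C ∈ FS(y,x)` has the tree edge `(x, x_h)` on `π_y(s,C)`. -/
def HeavyPair {V : Type*} {G : SimpleGraph V} (T : RSTree G) (hch : V → V)
    (uc vc : V → Set V → V) (x y : V) : Prop :=
  x ≠ T.root ∧ y ≠ T.root ∧ ¬ T.Anc x y ∧ ¬ T.Anc y x ∧
  T.IsChild (hch x) x ∧ T.IsChild (hch y) y ∧
  (G.induce (({x} : Set V)ᶜ)).Connected ∧ (G.induce (({y} : Set V)ᶜ)).Connected ∧
  (∀ C, IsCompOf G (T.Vx x) C → FullySens T (uc x) (vc x) (uc y) (vc y) x y C →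
    T.Anc (hch y) (uc x C)) ∧
  (∀ C, IsCompOf G (T.Vx y) C → FullySens T (uc y) (vc y) (uc x) (vc x) y x C →
    T.Anc (hch x) (uc y C))

/-- `u` is a light ancestor of `v`: `u` lies on the root-to-`v` path, `u ≠ v`, and the
edge of this path leaving `u` towards `v` goes to a child `c` of `u` with
`c ≠ hch u`. -/
def LightAnc {V : Type*} {G : SimpleGraph V} (T : RSTree G) (hch : V → V)
    (u v : V) : Prop :=
  ∃ c : V, T.parent c = u ∧ c ≠ u ∧ T.Anc c v ∧ c ≠ hch u


namespace RSTree

variable {V : Type*} {G : SimpleGraph V} (T : RSTree G)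

theorem anc_refl (a : V) : T.Anc a a := ⟨0, rfl⟩

theorem anc_trans {a b c : V} : T.Anc a b → T.Anc b c → T.Anc a c := by
  rintro ⟨n, rfl⟩ ⟨m, rfl⟩
  exact ⟨n + m, Function.iterate_add_apply _ _ _ _⟩

theorem anc_parent (c : V) : T.Anc (T.parent c) c := ⟨1, rfl⟩

theorem anc_root (a : V) : T.Anc T.root a := T.reaches a

theorem iterate_parent_root (n : ℕ) : T.parent^[n] T.root = T.root :=
  Function.iterate_fixed T.parent_root n

theorem iterate_parent_eq_root_of_le {a : V} {N k : ℕ} (hN : T.parent^[N] a = T.root)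
    (hk : N ≤ k) : T.parent^[k] a = T.root := by
  obtain ⟨j, rfl⟩ := Nat.exists_eq_add_of_le hk
  rw [add_comm, Function.iterate_add_apply, hN, iterate_parent_root]

/-- A vertex that is its own proper ancestor would be periodic under `parent`, hence the
root, which is its own only ancestor. -/
theorem anc_antisymm {a b : V} : T.Anc a b → T.Anc b a → a = b := by
  rintro ⟨n, rfl⟩ ⟨m, hm⟩
  rcases n with _ | n
  · rfl
  have hper : Function.IsPeriodicPt T.parent (m + (n + 1)) b := by
    rw [Function.IsPeriodicPt, Function.IsFixedPt, Function.iterate_add_apply, hm]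
  obtain ⟨N, hN⟩ := T.reaches b
  have hb : b = T.root := by
    rw [← (hper.mul_const N).eq]
    exact T.iterate_parent_eq_root_of_le hN (Nat.le_mul_of_pos_left N (by omega))
  subst hb
  exact T.iterate_parent_root _

theorem anc_total {a b w : V} : T.Anc a w → T.Anc b w → T.Anc a b ∨ T.Anc b a := by
  rintro ⟨n, rfl⟩ ⟨m, rfl⟩
  rcases le_total n m with h | h
  · obtain ⟨k, rfl⟩ := Nat.exists_eq_add_of_le h
    exact Or.inr ⟨k, by rw [← Function.iterate_add_apply, add_comm]⟩
  · obtain ⟨k, rfl⟩ := Nat.exists_eq_add_of_le h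
    exact Or.inl ⟨k, by rw [← Function.iterate_add_apply, add_comm]⟩

theorem sub_subset_sub {a b : V} (h : T.Anc a b) : T.sub b ⊆ T.sub a :=
  fun _ hw => T.anc_trans h hw

theorem eq_or_anc_of_anc_of_isChild {a c u : V} (hc : T.IsChild c u) :
    T.Anc a c → a = c ∨ T.Anc a u := by
  rintro ⟨_ | n, hn⟩
  · exact Or.inl hn.symm
  · exact Or.inr ⟨n, by rw [← hn, Function.iterate_succ_apply, hc.1]⟩

theorem not_anc_of_isChild {c u : V} (hc : T.IsChild c u) : ¬ T.Anc c u :=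
  fun h => hc.2 (T.anc_antisymm h (hc.1 ▸ T.anc_parent c))

theorem disjoint_sub_of_isChild {c c' u : V} (hc : T.IsChild c u) (hc' : T.IsChild c' u)
    (hne : c ≠ c') : Disjoint (T.sub c) (T.sub c') := by
  have not_anc : ∀ {c c'}, T.IsChild c u → T.IsChild c' u → c ≠ c' → ¬ T.Anc c c' :=
    fun hc hc' hne h => (T.eq_or_anc_of_anc_of_isChild hc' h).elim hne (T.not_anc_of_isChild hc)
  refine Set.disjoint_left.2 fun w hw hw' => ?_
  rcases T.anc_total hw hw' with h | h
  exacts [not_anc hc hc' hne h, not_anc hc' hc hne.symm h]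

theorem exists_anc_forall_of_forall_anc {v : V} (S : Finset V) (hS : ∀ x ∈ S, T.Anc x v)
    (hne : S.Nonempty) : ∃ u ∈ S, ∀ x ∈ S, T.Anc u x := by
  classical
  induction S using Finset.induction_on with
  | empty => exact absurd hne Finset.not_nonempty_empty
  | insert a S _ ih =>
    rcases S.eq_empty_or_nonempty with rfl | hSne
    · exact ⟨a, by simp, by simp [T.anc_refl]⟩
    obtain ⟨u, huS, hu⟩ := ih (fun x hx => hS x (by simp [hx])) hSne
    rcases T.anc_total (hS a (by simp)) (hS u (by simp [huS])) with hau | hua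
    · exact ⟨a, by simp, by simpa [T.anc_refl] using fun x hx => T.anc_trans hau (hu x hx)⟩
    · exact ⟨u, by simp [huS], by simpa [hua] using hu⟩

theorem ncard_setOf_anc_le {D : ℕ} {u : V} (hu : ∃ n ≤ D, T.parent^[n] u = T.root) :
    {w | T.Anc w u}.ncard ≤ D + 1 := by
  classical
  obtain ⟨n, hnD, hn⟩ := hu
  have hsub : {w | T.Anc w u} ⊆ (Finset.range (D + 1)).image (T.parent^[·] u) := by
    rintro w ⟨k, rfl⟩
    simp only [Finset.coe_image, Finset.coe_range, Set.mem_image, Set.mem_Iio]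
    rcases le_or_gt k D with hk | hk
    · exact ⟨k, by omega, rfl⟩
    · exact ⟨n, by omega, by rw [hn, T.iterate_parent_eq_root_of_le hn (by omega)]⟩
  calc {w | T.Anc w u}.ncard
      ≤ ((Finset.range (D + 1)).image (T.parent^[·] u) : Set V).ncard :=
        Set.ncard_le_ncard hsub (Finset.finite_toSet _)
    _ ≤ D + 1 := by
        rw [Set.ncard_coe_finset]
        exact Finset.card_image_le.trans (Finset.card_range _).le

end RSTree

section

variable {V : Type*} {G : SimpleGraph V}

theorem LightAnc.anc {T : RSTree G} {hch : V → V} {u v : V} (h : LightAnc T hch u v) :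
    T.Anc u v := by
  obtain ⟨c, hcu, -, hcv, -⟩ := h
  exact T.anc_trans ⟨1, hcu⟩ hcv

/-- Induction down the chain `S`: below its top element `u` the chain continues in the light
child `c` of `u` towards `v`, and `2 |T_c| ≤ |T_c| + |T_{hch u}| ≤ |T_u|`. -/
theorem two_pow_card_le_ncard_sub_of_lightAnc [Finite V] (T : RSTree G) {hch : V → V}
    (hhch : HchValid T hch) {v : V} (S : Finset V) (hS : ∀ x ∈ S, LightAnc T hch x v)
    {w : V} (hw : ∀ x ∈ S, T.Anc w x) : 2 ^ S.card ≤ (T.sub w).ncard := by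
  classical
  induction S using Finset.strongInduction generalizing w with
  | H S ih =>
    rcases S.eq_empty_or_nonempty with rfl | hne
    · exact (Set.ncard_pos (s := T.sub w)).2 ⟨w, T.anc_refl w⟩
    obtain ⟨u, huS, hu⟩ := T.exists_anc_forall_of_forall_anc S (fun x hx => (hS x hx).anc) hne
    obtain ⟨c, hcu, hcne, hcv, hc_light⟩ := hS u huS
    have hc : T.IsChild c u := ⟨hcu, hcne⟩
    have hheavy := hhch u ⟨c, hc⟩
    have hbelow : ∀ x ∈ S.erase u, T.Anc c x := by
      intro x hx
      rcases T.anc_total hcv (hS x (Finset.mem_of_mem_erase hx)).anc with h | h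
      · exact h
      rcases T.eq_or_anc_of_anc_of_isChild hc h with rfl | h
      · exact T.anc_refl x
      · exact absurd (T.anc_antisymm h (hu x (Finset.mem_of_mem_erase hx)))
          (Finset.ne_of_mem_erase hx)
    calc 2 ^ S.card = 2 * 2 ^ (S.erase u).card := by
          rw [← Finset.card_erase_add_one huS, pow_succ, mul_comm]
      _ ≤ 2 * (T.sub c).ncard := by
          gcongr
          exact ih _ (Finset.erase_ssubset huS) (fun x hx => hS x (Finset.mem_of_mem_erase hx))
            hbelow
      _ ≤ (T.sub c).ncard + (T.sub (hch u)).ncard := by linarith [hheavy.2 c hc]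
      _ = (T.sub c ∪ T.sub (hch u)).ncard :=
          (Set.ncard_union_eq (T.disjoint_sub_of_isChild hc hheavy.1 hc_light)).symm
      _ ≤ (T.sub u).ncard := Set.ncard_le_ncard <| Set.union_subset
          (T.sub_subset_sub ⟨1, hcu⟩) (T.sub_subset_sub ⟨1, hheavy.1.1⟩)
      _ ≤ (T.sub w).ncard := Set.ncard_le_ncard (T.sub_subset_sub (hw u huS))

theorem card_le_logb_of_lightAnc [Fintype V] (T : RSTree G) {hch : V → V}
    (hhch : HchValid T hch) {v : V} (S : Finset V) (hS : ∀ x ∈ S, LightAnc T hch x v) :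
    (S.card : ℝ) ≤ Real.logb 2 (Fintype.card V) := by
  have hV : 2 ^ S.card ≤ Fintype.card V := calc
    2 ^ S.card ≤ (T.sub T.root).ncard :=
      two_pow_card_le_ncard_sub_of_lightAnc T hhch S hS fun x _ => T.anc_root x
    _ ≤ Fintype.card V := (Set.ncard_le_card _).trans_eq Nat.card_eq_fintype_card
  have hV_pos : (0 : ℝ) < Fintype.card V := by exact_mod_cast (Nat.one_le_two_pow.trans hV)
  rw [Real.le_logb_iff_rpow_le one_lt_two hV_pos, Real.rpow_natCast]
  exact_mod_cast hV

theorem ncard_compPath_le (T : RSTree G) (uc vc : Set V → V) (C : Set V) {D : ℕ}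
    (h : ∃ n ≤ D, T.parent^[n] (uc C) = T.root) : (CompPath T uc vc C).ncard ≤ D + 2 :=
  (Set.ncard_union_le _ _).trans (by rw [Set.ncard_singleton]; linarith [T.ncard_setOf_anc_le h])

end

theorem Set.ncard_le_card_mul_of_mem_sigma {α β : Type*} [Finite α] [Finite β]
    {S : Set (α × β)} (A : Finset α) (P : α → Set β) {n : ℕ}
    (hS : ∀ p ∈ S, p.1 ∈ A ∧ p.2 ∈ P p.1) (hP : ∀ a ∈ A, (P a).ncard ≤ n) :
    S.ncard ≤ A.card * n :=
  calc S.ncard ≤ (⋃ a ∈ A, {a} ×ˢ P a).ncard :=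
        Set.ncard_le_ncard fun p hp => Set.mem_biUnion (hS p hp).1 ⟨rfl, (hS p hp).2⟩
    _ ≤ ∑ a ∈ A, ({a} ×ˢ P a).ncard := A.set_ncard_biUnion_le _
    _ ≤ ∑ _a ∈ A, n := Finset.sum_le_sum fun a ha => by
        rw [Set.ncard_prod, Set.ncard_singleton, one_mul]
        exact hP a ha
    _ = A.card * n := by rw [Finset.sum_const, smul_eq_mul]

theorem stmt14_general {V : Type*} [Fintype V] (G : SimpleGraph V)
    (T : RSTree G) (hch : V → V) (hhch : HchValid T hch)
    (uc vc : V → Set V → V)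
    (D : ℕ) (hdepth : ∀ v : V, ∃ n ≤ D, T.parent^[n] v = T.root)
    (v : V) :
    ({p : V × V | p.1 ≠ T.root ∧ (G.induce (({p.1} : Set V)ᶜ)).Connected ∧
        LightAnc T hch p.1 v ∧
        p.2 ∈ CompPath T (uc p.1) (vc p.1) (CompOfVert G (T.Vx p.1) v)}.ncard : ℝ)
      ≤ Real.logb 2 (Fintype.card V) * (D + 2) := by
  classical
  set L := Finset.univ.filter (LightAnc T hch · v)
  have hL : (L.card : ℝ) ≤ Real.logb 2 (Fintype.card V) :=
    card_le_logb_of_lightAnc T hhch L fun x hx => (Finset.mem_filter.1 hx).2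
  calc _ ≤ (L.card : ℝ) * (D + 2) := by
        norm_cast
        exact Set.ncard_le_card_mul_of_mem_sigma L
          (fun x => CompPath T (uc x) (vc x) (CompOfVert G (T.Vx x) v))
          (fun p hp => ⟨Finset.mem_filter.2 ⟨Finset.mem_univ _, hp.2.2.1⟩, hp.2.2.2⟩)
          (fun x _ => ncard_compPath_le T _ _ _ (hdepth _))
    _ ≤ Real.logb 2 (Fintype.card V) * (D + 2) := by gcongr

/-- Suppose the rooted tree `T` has depth at most `D`. Then for every
vertex `v`, the number of ordered pairs `(x,y)` of vertices (with `x ≠ s` and `G \ {x}`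
connected, so that the data `𝒞_x`, `π_x` are defined) such that `v ∈ LDS(x,y)` — i.e.
`x` is a light ancestor of `v` and `y` lies on `π_x(s, C_{x,v})` — is at most
`log₂(n) · (D+2)`: `x` must be one of the at most `log₂ n` light ancestors of `v`, and
`y` one of the at most `D+2` vertices of `π_x(s, C_{x,v})`. -/
theorem stmt14 {V : Type*} [Fintype V] (G : SimpleGraph V) (hG : G.Connected)
    (T : RSTree G) (hch : V → V) (hhch : HchValid T hch)
    (uc vc : V → Set V → V) (hgood : GoodChoice G T uc vc)
    (D : ℕ) (hdepth : ∀ v : V, ∃ n ≤ D, T.parent^[n] v = T.root)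
    (v : V) :
    ({p : V × V | p.1 ≠ T.root ∧ (G.induce (({p.1} : Set V)ᶜ)).Connected ∧
        LightAnc T hch p.1 v ∧
        p.2 ∈ CompPath T (uc p.1) (vc p.1) (CompOfVert G (T.Vx p.1) v)}.ncard : ℝ)
      ≤ Real.logb 2 (Fintype.card V) * (D + 2) :=
  stmt14_general G T hch hhch uc vc D hdepth v
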